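/- Applying the two-outcome joint measurement in the basis {XZ, ZX} to qubits C and D of the product of two 2-qubit cluster states |ψ⟩_AC ⊗ |ψ⟩_BD, where |ψ⟩ = (|0+⟩ + |1−⟩)/√2, projects qubits A and B onto a state that is equal to |ψ⟩_AB up to a local Pauli (X or Z) correction depending on the measurement outcome. -/

import Mathlib

open scoped BigOperators

/-- Bit flip on `Fin 2`. -/
def bitflip : Fin 2 → Fin 2 := fun i => if i = 0 then 1 else 0

/-- Sign `(-1)^i` as a complex number. -/
def bitsign : Fin 2 → ℂ := fun i => if i = 0 then 1 else -1

/-- Amplitudes of the two-qubit cluster state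
`|ψ⟩ = (|0+⟩ + |1−⟩)/√2 = (|00⟩ + |01⟩ + |10⟩ − |11⟩)/2`. -/
noncomputable def clusterψ : Fin 2 → Fin 2 → ℂ :=
  fun a c => (1 / 2 : ℂ) * (if a = 1 then (if c = 1 then -1 else 1) else 1)

/-- Pauli `X`. -/
def pauliX : Matrix (Fin 2) (Fin 2) ℂ := !![0, 1; 1, 0]

/-- Pauli `Z`. -/
def pauliZ : Matrix (Fin 2) (Fin 2) ℂ := !![1, 0; 0, -1]

/-- The local Pauli corrections `{I, X, Z}`. -/
def pauliSet : Set (Matrix (Fin 2) (Fin 2) ℂ) := {1, pauliX, pauliZ}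

/-!
The two eigenvalue equations determine `χ` from `χ 0 0`, so `χ` is a nonzero multiple of
`(1, ε₂; ε₁, -ε₁ε₂)`. Writing `ε₁ = (-1)^s`, `ε₂ = (-1)^t`, the projected amplitude at `(a, b)`
is a character sum over `c, d` that collapses to `ψ(a + s, b + t)` (indices mod 2), which is
`(X^s ⊗ X^t)|ψ⟩`.
-/

-- The joint eigenvector of `X_C Z_D` and `Z_C X_D` with eigenvalues `ε₁, ε₂`, normalised at `|00⟩`.
def fusionVector (ε₁ ε₂ : ℂ) : Fin 2 → Fin 2 → ℂ :=
  ![![1, ε₂], ![ε₁, -(ε₁ * ε₂)]]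

noncomputable def fusionProjection (χ : Fin 2 → Fin 2 → ℂ) (a b : Fin 2) : ℂ :=
  ∑ c : Fin 2, ∑ d : Fin 2, (starRingEnd ℂ) (χ c d) * (clusterψ a c * clusterψ b d)

theorem eq_smul_fusionVector {ε₁ ε₂ : ℂ} {χ : Fin 2 → Fin 2 → ℂ}
    (hXZ : ∀ c d, bitsign d * χ (bitflip c) d = ε₁ * χ c d)
    (hZX : ∀ c d, bitsign c * χ c (bitflip d) = ε₂ * χ c d) :
    χ = χ 0 0 • fusionVector ε₁ ε₂ := by
  have h10 : χ 1 0 = ε₁ * χ 0 0 := by simpa [bitflip, bitsign] using hXZ 0 0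
  have h01 : χ 0 1 = ε₂ * χ 0 0 := by simpa [bitflip, bitsign] using hZX 0 0
  have h11 : χ 1 1 = -(ε₁ * (ε₂ * χ 0 0)) := by
    have h := hXZ 0 1
    simp [bitflip, bitsign, h01] at h
    linear_combination -h
  funext c d
  fin_cases c <;> fin_cases d <;> simp [fusionVector, h10, h01, h11] <;> ring

theorem fusionProjection_smul (k : ℂ) (χ : Fin 2 → Fin 2 → ℂ) (a b : Fin 2) :
    fusionProjection (k • χ) a b = (starRingEnd ℂ) k * fusionProjection χ a b := by
  simp only [fusionProjection, Pi.smul_apply, smul_eq_mul, map_mul, Finset.mul_sum, mul_assoc]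

theorem fusionProjection_fusionVector_bitsign (s t a b : Fin 2) :
    fusionProjection (fusionVector (bitsign s) (bitsign t)) a b = clusterψ (a + s) (b + t) := by
  fin_cases s <;> fin_cases t <;> fin_cases a <;> fin_cases b <;>
    simp [fusionProjection, fusionVector, bitsign, clusterψ, Fin.sum_univ_two] <;> ring

theorem sum_pauliX_pow_mul_pauliX_pow_mul (s t a b : Fin 2) (φ : Fin 2 → Fin 2 → ℂ) :
    ∑ a' : Fin 2, ∑ b' : Fin 2, (pauliX ^ (s : ℕ)) a a' * (pauliX ^ (t : ℕ)) b b' * φ a' b' =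
      φ (a + s) (b + t) := by
  fin_cases s <;> fin_cases t <;> fin_cases a <;> fin_cases b <;>
    simp [pauliX, Fin.sum_univ_two, Matrix.one_apply]

theorem pauliX_pow_mem_pauliSet (s : Fin 2) : pauliX ^ (s : ℕ) ∈ pauliSet := by
  fin_cases s <;> simp [pauliSet]

theorem exists_bitsign_eq {ε : ℂ} (hε : ε = 1 ∨ ε = -1) : ∃ s : Fin 2, ε = bitsign s := by
  rcases hε with rfl | rfl
  exacts [⟨0, rfl⟩, ⟨1, rfl⟩]

/-- The fusion (`XZ, ZX` joint measurement) applied to qubits `C`, `D` of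
`|ψ⟩_AC ⊗ |ψ⟩_BD`: for each outcome `(ε₁, ε₂) ∈ {±1}²`, projecting qubits `C`, `D`
onto the joint eigenvector `χ` of `X_C Z_D` and `Z_C X_D` with eigenvalues `ε₁, ε₂`
leaves qubits `A`, `B` in the (unnormalized) state `(P ⊗ Q)|ψ⟩_AB` — up to a nonzero
scalar — for some local Pauli corrections `P, Q ∈ {I, X, Z}` determined by the
measurement outcome. -/
theorem fusion_outcome (ε₁ ε₂ : ℂ) (hε₁ : ε₁ = 1 ∨ ε₁ = -1) (hε₂ : ε₂ = 1 ∨ ε₂ = -1)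
    (χ : Fin 2 → Fin 2 → ℂ) (hχ : χ ≠ 0)
    (hXZ : ∀ c d, bitsign d * χ (bitflip c) d = ε₁ * χ c d)
    (hZX : ∀ c d, bitsign c * χ c (bitflip d) = ε₂ * χ c d) :
    ∃ P ∈ pauliSet, ∃ Q ∈ pauliSet, ∃ lam : ℂ, lam ≠ 0 ∧
      ∀ a b : Fin 2,
        (∑ c : Fin 2, ∑ d : Fin 2,
            (starRingEnd ℂ) (χ c d) * (clusterψ a c * clusterψ b d)) =
        lam * ∑ a' : Fin 2, ∑ b' : Fin 2, P a a' * Q b b' * clusterψ a' b' := by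
  obtain ⟨s, rfl⟩ := exists_bitsign_eq hε₁
  obtain ⟨t, rfl⟩ := exists_bitsign_eq hε₂
  have hχ_eq := eq_smul_fusionVector hXZ hZX
  have hχ₀ : χ 0 0 ≠ 0 := fun h => hχ (by rw [hχ_eq, h, zero_smul])
  refine ⟨pauliX ^ (s : ℕ), pauliX_pow_mem_pauliSet s, pauliX ^ (t : ℕ),
    pauliX_pow_mem_pauliSet t, (starRingEnd ℂ) (χ 0 0), by simpa using hχ₀, fun a b => ?_⟩
  rw [sum_pauliX_pow_mul_pauliX_pow_mul]
  change fusionProjection χ a b = _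
  conv_lhs => rw [hχ_eq, fusionProjection_smul, fusionProjection_fusionVector_bitsign]
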